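/- Let q : K → L be an open continuous surjection between compact Hausdorff spaces and let μ : L → P(K) be a weak*-continuous map into the Radon probability measures on K with q_*μ_l = δ_l for every l ∈ L. If a net (f_α)_{α∈A} in C_q(K) converges in the compact-open topology to f ∈ C_q(K), then ∫_{K_{s(f_α)}} f_α dμ_{s(f_α)} converges to ∫_{K_{s(f)}} f dμ_{s(f)}, where each μ_l is regarded as a probability measure on the fiber K_l (which carries its full mass since q_*μ_l = δ_l). -/

import Mathlib

open Filter Topology Set Function MeasureTheory

/-- A continuous fiber map between the fibers of the bundles `p : X → L` and `q : Y → L'`: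
an element of `C_p^q(X,Y)` with source `src` and range `rng`. -/
structure FiberMap {X L Y L' : Type} [TopologicalSpace X] [TopologicalSpace Y]
    (p : X → L) (q : Y → L') where
  src : L
  rng : L'
  toFun : {x : X // p x = src} → Y
  maps_to : ∀ x, q (toFun x) = rng
  continuous_toFun : Continuous toFun

/-- The compact-open topology on `C_p^q(X,Y)`, generated by the sets
`W(C,O) = {θ | θ(C ∩ X_{s(θ)}) ⊆ O}` for `C ⊆ X` compact and `O ⊆ Y` open. -/
def fiberCO {X L Y L' : Type} [TopologicalSpace X] [TopologicalSpace Y]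
    (p : X → L) (q : Y → L') : TopologicalSpace (FiberMap p q) :=
  TopologicalSpace.generateFrom
    {W | ∃ (C : Set X) (O : Set Y), IsCompact C ∧ IsOpen O ∧
      W = {θ : FiberMap p q | ∀ x : {x : X // p x = θ.src}, (x : X) ∈ C → θ.toFun x ∈ O}}

instance fiberMapTopology {X L Y L' : Type} [TopologicalSpace X] [TopologicalSpace Y]
    (p : X → L) (q : Y → L') : TopologicalSpace (FiberMap p q) :=
  fiberCO p q

/-! Extend `f` to a continuous `F` on `K` (Tietze). Convergence `f_α → f` in the compact-open
topology forces `s(f_α) → s(f)` (the fibers being nonempty) and makes `f_α` uniformly close to `F`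
on `K_{s(f_α)}`. As `μ_l` lives on `K_l`, the integral of `f_α` is then close to `∫ F dμ_{s(f_α)}`,
which tends to `∫ F dμ_{s(f)} = ∫ f dμ_{s(f)}` by weak* continuity of `μ`. -/

namespace FiberMap

variable {X L Y L' : Type} [TopologicalSpace X] {p : X → L} {q : Y → L'}

theorem isOpen_setOf_mapsTo [TopologicalSpace Y] {C : Set X} {O : Set Y} (hC : IsCompact C)
    (hO : IsOpen O) :
    IsOpen {θ : FiberMap p q | ∀ x : {x : X // p x = θ.src}, (x : X) ∈ C → θ.toFun x ∈ O} :=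
  TopologicalSpace.isOpen_generateFrom_of_mem ⟨C, O, hC, hO, rfl⟩

/-- As fibers are nonempty, `θ.src ∈ U` iff `θ` maps the part of its fiber outside `p ⁻¹' U`
into `∅`. -/
theorem continuous_src [TopologicalSpace Y] [CompactSpace X] [TopologicalSpace L]
    (hp : Continuous p) (hps : Surjective p) : Continuous (src : FiberMap p q → L) := by
  refine continuous_def.2 fun U hU => ?_
  convert isOpen_setOf_mapsTo (p := p) (q := q)
    (hU.isClosed_compl.preimage hp).isCompact isOpen_empty using 1
  ext θ
  constructor
  · rintro hθ x hx
    exact hx (show p x ∈ U by rw [x.2]; exact hθ)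
  · intro h
    by_contra hθ
    obtain ⟨x, hx⟩ := hps θ.src
    exact h ⟨x, hx⟩ (show p x ∉ U from hx ▸ hθ)

theorem exists_continuousMap_extension [NormalSpace X] [TopologicalSpace L] [T1Space L]
    [TopologicalSpace Y] [TietzeExtension.{0} Y] (hp : Continuous p) (θ : FiberMap p q) :
    ∃ F : C(X, Y), ∀ x : {x // p x = θ.src}, F x = θ.toFun x := by
  obtain ⟨F, hF⟩ := ContinuousMap.exists_extension
    (isClosed_singleton.preimage hp).isClosedEmbedding_subtypeVal
    ⟨θ.toFun, θ.continuous_toFun⟩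
  exact ⟨F, fun x => DFunLike.congr_fun hF x⟩

/-- Cover the fiber of `θ` by finitely many compact sets on which `F` oscillates little, and use
the subbasic neighbourhoods of `θ` given by these sets and by the complement of their union. -/
theorem eventually_forall_dist_lt [CompactSpace X] [TopologicalSpace L] [T1Space L]
    [PseudoMetricSpace Y] (hp : Continuous p) {θ : FiberMap p q} {F : C(X, Y)}
    (hF : ∀ x : {x // p x = θ.src}, F x = θ.toFun x) {ε : ℝ} (hε : 0 < ε) :
    ∀ᶠ θ' in 𝓝 θ, ∀ x : {x : X // p x = θ'.src}, dist (θ'.toFun x) (F x) < ε := by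
  set N : X → Set X := fun y => F ⁻¹' Metric.closedBall (F y) (ε / 4)
  have hN_nhds : ∀ y, N y ∈ 𝓝 y := fun y =>
    F.continuous.continuousAt.preimage_mem_nhds
      (Metric.closedBall_mem_nhds (F y) (by positivity))
  have hN_compact : ∀ y, IsCompact (N y) := fun y =>
    (Metric.isClosed_closedBall.preimage F.continuous).isCompact
  obtain ⟨t, -, hcover⟩ := (isClosed_singleton.preimage hp).isCompact.elim_nhds_subcover
    (fun y => interior (N y)) (fun y _ => interior_mem_nhds.2 (hN_nhds y))
  set U := ⋃ y ∈ t, interior (N y)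
  have h_fiber : ∀ᶠ θ' in 𝓝 θ,
      ∀ x : {x : X // p x = θ'.src}, (x : X) ∈ Uᶜ → θ'.toFun x ∈ (∅ : Set Y) :=
    (isOpen_setOf_mapsTo (isOpen_biUnion fun _ _ => isOpen_interior).isClosed_compl.isCompact
      isOpen_empty).mem_nhds fun x hx => hx (hcover x.2)
  have h_near : ∀ y ∈ t, ∀ᶠ θ' in 𝓝 θ, ∀ x : {x : X // p x = θ'.src},
      (x : X) ∈ N y → θ'.toFun x ∈ Metric.ball (F y) (ε / 2) := fun y _ =>
    (isOpen_setOf_mapsTo (hN_compact y) Metric.isOpen_ball).mem_nhds fun x hx => by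
      rw [← hF, Metric.mem_ball]
      exact (Metric.mem_closedBall.1 hx).trans_lt (by linarith)
  filter_upwards [h_fiber, (eventually_all_finset t).2 h_near] with θ' hU hN x
  obtain ⟨y, hyt, hxy⟩ := mem_iUnion₂.1 (not_not.1 fun hx => hU x hx)
  have h1 := Metric.mem_ball.1 (hN y hyt x (interior_subset hxy))
  have h2 := Metric.mem_closedBall.1 (interior_subset hxy : (x : X) ∈ N y)
  calc dist (θ'.toFun x) (F x) ≤ dist (θ'.toFun x) (F y) + dist (F x) (F y) :=
        dist_triangle_right _ _ _
    _ < ε := by linarith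

end FiberMap

section Integration

variable {K E : Type*} [MeasurableSpace K] [NormedAddCommGroup E] [NormedSpace ℝ E]

theorem dist_integral_le_of_forall_dist_le {ν : Measure K} [IsProbabilityMeasure ν]
    {g h : K → E} (hg : Integrable g ν) (hh : Integrable h ν) {C : ℝ}
    (hC : ∀ x, dist (g x) (h x) ≤ C) : dist (∫ x, g x ∂ν) (∫ x, h x ∂ν) ≤ C := by
  rw [dist_eq_norm, ← integral_sub hg hh]
  simpa using norm_integral_le_of_norm_le_const (μ := ν)
    (Eventually.of_forall fun x => (dist_eq_norm (g x) (h x)) ▸ hC x)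

variable {P : K → Prop} {ν : Measure K}

theorem integral_comap_subtype_val_of_ae (hP : MeasurableSet {x | P x}) (hν : ∀ᵐ x ∂ν, P x)
    (g : K → E) :
    ∫ x : {x // P x}, g x ∂(ν.comap Subtype.val) = ∫ x, g x ∂ν :=
  (integral_subtype_comap hP g).trans
    (by rw [Measure.restrict_eq_self_of_ae_mem (s := {x | P x}) hν])

theorem isProbabilityMeasure_comap_subtype_val_of_ae [IsProbabilityMeasure ν]
    (hP : MeasurableSet {x | P x}) (hν : ∀ᵐ x ∂ν, P x) :
    IsProbabilityMeasure (ν.comap (Subtype.val : {x // P x} → K)) :=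
  (MeasurableEmbedding.subtype_coe hP).isProbabilityMeasure_comap (by simpa using hν)

end Integration

theorem MeasureTheory.ProbabilityMeasure.continuous_integral_continuousMap_rclike {X 𝕜 : Type*}
    [TopologicalSpace X] [CompactSpace X] [MeasurableSpace X] [OpensMeasurableSpace X]
    [RCLike 𝕜] (F : C(X, 𝕜)) :
    Continuous fun ν : ProbabilityMeasure X => ∫ x, F x ∂(ν : Measure X) :=
  continuous_iff_continuousAt.2 fun ν =>
    (ProbabilityMeasure.tendsto_iff_forall_integral_rclike_tendsto 𝕜).1
      (continuous_id.tendsto ν) (BoundedContinuousFunction.mkOfCompact F)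

theorem statement15_general {K L : Type} [TopologicalSpace K] [CompactSpace K] [T2Space K]
    [MeasurableSpace K] [BorelSpace K]
    [TopologicalSpace L] [T2Space L]
    [MeasurableSpace L] [BorelSpace L]
    (q : K → L) (hq : Continuous q) (hqs : Function.Surjective q)
    (μ : L → MeasureTheory.ProbabilityMeasure K) (hμc : Continuous μ)
    (hμq : ∀ l : L, (μ l : MeasureTheory.Measure K).map q = MeasureTheory.Measure.dirac l) :
    ∀ (A : Type) [Preorder A] [IsDirected A (· ≤ ·)] [Nonempty A]
      (f : A → FiberMap q (fun _ : ℂ => ())) (f' : FiberMap q (fun _ : ℂ => ())),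
      Filter.Tendsto f Filter.atTop (nhds f') →
      Filter.Tendsto
        (fun a => ∫ x : {x : K // q x = (f a).src}, (f a).toFun x
          ∂(MeasureTheory.Measure.comap Subtype.val
              (μ (f a).src : MeasureTheory.Measure K)))
        Filter.atTop
        (nhds (∫ x : {x : K // q x = f'.src}, f'.toFun x
          ∂(MeasureTheory.Measure.comap Subtype.val
              (μ f'.src : MeasureTheory.Measure K)))) := by
  intro A _ _ _ f f' hf
  have hfiber_closed : ∀ l, IsClosed {x | q x = l} := fun l => isClosed_singleton.preimage hq
  have hfiber_compact : ∀ l, CompactSpace {x // q x = l} := fun l =>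
    isCompact_iff_compactSpace.mp (hfiber_closed l).isCompact
  have hμ_fiber : ∀ l, ∀ᵐ x ∂(μ l : Measure K), q x = l := fun l =>
    ae_of_ae_map hq.aemeasurable (by rw [hμq l]; exact (ae_dirac_iff measurableSet_eq).2 rfl)
  have hintegral_fiber : ∀ (l : L) (g : K → ℂ), ∫ x : {x // q x = l}, g x
      ∂(Measure.comap Subtype.val (μ l : Measure K)) = ∫ x, g x ∂(μ l : Measure K) := fun l =>
    integral_comap_subtype_val_of_ae (hfiber_closed l).measurableSet (hμ_fiber l)
  obtain ⟨F, hF⟩ := f'.exists_continuousMap_extension (Y := ℂ) hq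
  have hsrc := ((FiberMap.continuous_src hq hqs).tendsto f').comp hf
  have hF_lim : Tendsto (fun a => ∫ x, F x ∂(μ (f a).src : Measure K)) atTop
      (𝓝 (∫ x, F x ∂(μ f'.src : Measure K))) :=
    (((ProbabilityMeasure.continuous_integral_continuousMap_rclike F).comp hμc).tendsto _).comp
      hsrc
  simp_rw [← hF, hintegral_fiber]
  refine hF_lim.congr_dist (Metric.tendsto_nhds.2 fun ε hε => ?_)
  filter_upwards [hf.eventually (f'.eventually_forall_dist_lt hq hF (half_pos hε))] with a ha
  have := isProbabilityMeasure_comap_subtype_val_of_ae (hfiber_closed (f a).src).measurableSet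
    (hμ_fiber (f a).src)
  rw [dist_zero_right, Real.norm_of_nonneg dist_nonneg, dist_comm, ← hintegral_fiber]
  refine (dist_integral_le_of_forall_dist_le ?_ ?_ fun x => (ha x).le).trans_lt (half_lt_self hε)
  · exact (f a).continuous_toFun.integrable_of_hasCompactSupport (.of_compactSpace _)
  · exact (F.continuous.comp continuous_subtype_val).integrable_of_hasCompactSupport
      (.of_compactSpace _)

/-- Continuity of fiberwise integration: if `μ : L → P(K)` is weak*-continuous with
`q_*μ_l = δ_l` and a net `(f_α)` in `C_q(K)` converges to `f` in the compact-open
topology, then `∫_{K_{s(f_α)}} f_α dμ_{s(f_α)} → ∫_{K_{s(f)}} f dμ_{s(f)}`, where each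
`μ_l` is regarded as a measure on the fiber `K_l` via the subspace (comap) measure. -/
theorem statement15 {K L : Type} [TopologicalSpace K] [CompactSpace K] [T2Space K]
    [MeasurableSpace K] [BorelSpace K]
    [TopologicalSpace L] [CompactSpace L] [T2Space L]
    [MeasurableSpace L] [BorelSpace L]
    (q : K → L) (hq : Continuous q) (hqs : Function.Surjective q) (hqo : IsOpenMap q)
    (μ : L → MeasureTheory.ProbabilityMeasure K) (hμc : Continuous μ)
    (hμreg : ∀ l : L, ((μ l : MeasureTheory.Measure K)).Regular)
    (hμq : ∀ l : L, (μ l : MeasureTheory.Measure K).map q = MeasureTheory.Measure.dirac l) :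
    ∀ (A : Type) [Preorder A] [IsDirected A (· ≤ ·)] [Nonempty A]
      (f : A → FiberMap q (fun _ : ℂ => ())) (f' : FiberMap q (fun _ : ℂ => ())),
      Filter.Tendsto f Filter.atTop (nhds f') →
      Filter.Tendsto
        (fun a => ∫ x : {x : K // q x = (f a).src}, (f a).toFun x
          ∂(MeasureTheory.Measure.comap Subtype.val
              (μ (f a).src : MeasureTheory.Measure K)))
        Filter.atTop
        (nhds (∫ x : {x : K // q x = f'.src}, f'.toFun x
          ∂(MeasureTheory.Measure.comap Subtype.val
              (μ f'.src : MeasureTheory.Measure K)))) :=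
  statement15_general q hq hqs μ hμc hμq
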